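/- For any real matrix M and any unit vectors u, v (with ‖u‖₂ = ‖v‖₂ = 1), and any factorization M = AB, the trace norm of (u vᵀ) ∘ M is at most ‖A‖_r · ‖B‖_c, where ‖A‖_r is the max row ℓ₂-norm of A and ‖B‖_c the max column ℓ₂-norm of B. Hence γ₂(M) ≥ max_{u,v unit} ‖(u vᵀ) ∘ M‖_tr. -/

import Mathlib

open Matrix Finset

noncomputable def rowNormMax {X J : Type*} [Fintype J] (A : Matrix X J ℝ) : ℝ :=
  ⨆ i, Real.sqrt (∑ j, A i j ^ 2)

noncomputable def colNormMax {J Y : Type*} [Fintype J] (B : Matrix J Y ℝ) : ℝ :=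
  ⨆ j, Real.sqrt (∑ i, B i j ^ 2)

/-- The `γ₂` (factorization) norm of a real matrix. -/
noncomputable def gamma2 {X Y : Type*} [Fintype X] [Fintype Y] (M : Matrix X Y ℝ) : ℝ :=
  sInf {c | ∃ (r : ℕ) (A : Matrix X (Fin r) ℝ) (B : Matrix (Fin r) Y ℝ),
    M = A * B ∧ c = rowNormMax A * colNormMax B}

/-- The trace (nuclear) norm: the sum of the singular values of `M`,
i.e. the square roots of the eigenvalues of `Mᴴ * M`. -/
noncomputable def traceNorm {m n : ℕ} (M : Matrix (Fin m) (Fin n) ℝ) : ℝ :=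
  ∑ i, Real.sqrt ((Matrix.isHermitian_conjTranspose_mul_self M).eigenvalues i)

/-!
Write `D_u` for the diagonal matrix of `u`. Then `(u vᵀ) ∘ (A B) = (D_u A) (B D_v)`, and
`‖D_u A‖_F ≤ ‖u‖₂ ‖A‖_r`, `‖B D_v‖_F ≤ ‖v‖₂ ‖B‖_c`, so it suffices that `‖X Y‖_tr ≤ ‖X‖_F ‖Y‖_F`.
Let `e_s` be an orthonormal eigenbasis of `(X Y)ᵀ (X Y)` and `x_s = X Y e_s / σ_s` the left
singular vectors. Then `‖X Y‖_tr = ∑_s ⟨x_s, X Y e_s⟩ = ∑_{s,k} ⟨x_s, X_{·k}⟩ ⟨Y_{k·}, e_s⟩`, and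
Cauchy–Schwarz bounds this by `(∑_{s,k} ⟨x_s, X_{·k}⟩²)^½ ≤ ‖X‖_F` (Bessel, column by column)
times `(∑_{s,k} ⟨Y_{k·}, e_s⟩²)^½ = ‖Y‖_F` (Parseval, row by row).
-/
namespace OrthonormalBasis

variable {ι : Type*} [Fintype ι] (b : OrthonormalBasis ι ℝ (EuclideanSpace ℝ ι))

theorem dotProduct_eq_ite [DecidableEq ι] (s t : ι) :
    (⇑(b s) : ι → ℝ) ⬝ᵥ ⇑(b t) = if s = t then 1 else 0 := by
  rw [← orthonormal_iff_ite.mp b.orthonormal s t, EuclideanSpace.inner_eq_star_dotProduct,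
    dotProduct_comm]
  rfl

theorem sum_sq_dotProduct (w : ι → ℝ) : ∑ s, ((⇑(b s) : ι → ℝ) ⬝ᵥ w) ^ 2 = w ⬝ᵥ w := by
  have := b.sum_sq_inner_right (WithLp.toLp 2 w)
  rw [← real_inner_self_eq_norm_sq] at this
  simpa only [EuclideanSpace.inner_eq_star_dotProduct, star_trivial, dotProduct_comm w] using this

end OrthonormalBasis

theorem sum_sq_dotProduct_le_of_pairwise_orthogonal {ι κ : Type*} [Fintype ι] [Fintype κ]
    (x : κ → ι → ℝ) (horth : Pairwise fun s t => x s ⬝ᵥ x t = 0)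
    (hnorm : ∀ s, x s ⬝ᵥ x s ≤ 1) (w : ι → ℝ) :
    ∑ s, (x s ⬝ᵥ w) ^ 2 ≤ w ⬝ᵥ w := by
  set c : κ → ℝ := fun s => x s ⬝ᵥ w
  set p : ι → ℝ := ∑ s, c s • x s
  have hpw : p ⬝ᵥ w = ∑ s, c s ^ 2 := by
    simp only [p, sum_dotProduct, smul_dotProduct, smul_eq_mul, sq, c]
  have hpp : p ⬝ᵥ p = ∑ s, c s ^ 2 * (x s ⬝ᵥ x s) := by
    simp only [p, sum_dotProduct, dotProduct_sum, smul_dotProduct, dotProduct_smul, smul_eq_mul]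
    refine sum_congr rfl fun s _ => ?_
    rw [sum_eq_single s (fun t _ hts => by rw [horth hts, mul_zero]) (by simp)]
    ring
  have hpp_le : p ⬝ᵥ p ≤ ∑ s, c s ^ 2 := hpp ▸ sum_le_sum fun s _ =>
    mul_le_of_le_one_right (sq_nonneg _) (hnorm s)
  have hres : 0 ≤ (w - p) ⬝ᵥ (w - p) := dotProduct_self_star_nonneg _
  rw [sub_dotProduct, dotProduct_sub, dotProduct_sub, dotProduct_comm w p, hpw] at hres
  linarith

theorem mulVec_dotProduct_mulVec_eigenvectorBasis {m n : Type*} [Fintype m] [Fintype n]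
    [DecidableEq n] (N : Matrix m n ℝ) (s t : n) :
    (N *ᵥ ⇑((isHermitian_conjTranspose_mul_self N).eigenvectorBasis s)) ⬝ᵥ
      (N *ᵥ ⇑((isHermitian_conjTranspose_mul_self N).eigenvectorBasis t)) =
    if s = t then (isHermitian_conjTranspose_mul_self N).eigenvalues s else 0 := by
  set hN := isHermitian_conjTranspose_mul_self N
  rw [dotProduct_mulVec, ← mulVec_transpose, mulVec_mulVec,
    ← conjTranspose_eq_transpose_of_trivial, hN.mulVec_eigenvectorBasis, smul_dotProduct,
    OrthonormalBasis.dotProduct_eq_ite, smul_eq_mul, mul_ite, mul_one, mul_zero]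

theorem exists_traceNorm_eq_sum_dotProduct_mulVec {m n : ℕ} (N : Matrix (Fin m) (Fin n) ℝ) :
    ∃ (x : Fin n → Fin m → ℝ) (b : OrthonormalBasis (Fin n) ℝ (EuclideanSpace ℝ (Fin n))),
      (Pairwise fun s t => x s ⬝ᵥ x t = 0) ∧ (∀ s, x s ⬝ᵥ x s ≤ 1) ∧
      traceNorm N = ∑ s, x s ⬝ᵥ N *ᵥ ⇑(b s) := by
  set hN := isHermitian_conjTranspose_mul_self N
  have hnonneg := eigenvalues_conjTranspose_mul_self_nonneg N
  -- `(√0)⁻¹ = 0`, so `x s = 0` when `σ_s = 0` and no case split is needed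
  refine ⟨fun s => (√(hN.eigenvalues s))⁻¹ • N *ᵥ ⇑(hN.eigenvectorBasis s),
    hN.eigenvectorBasis, fun s t hst => ?_, fun s => ?_, sum_congr rfl fun s _ => ?_⟩
  · dsimp only
    rw [smul_dotProduct, dotProduct_smul, mulVec_dotProduct_mulVec_eigenvectorBasis, if_neg hst,
      smul_zero, smul_zero]
  · rw [smul_dotProduct, dotProduct_smul, mulVec_dotProduct_mulVec_eigenvectorBasis, if_pos rfl,
      smul_smul, ← mul_inv, Real.mul_self_sqrt (hnonneg s), smul_eq_mul]
    exact inv_mul_le_one_of_le₀ le_rfl (hnonneg s)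
  · rw [smul_dotProduct, mulVec_dotProduct_mulVec_eigenvectorBasis, if_pos rfl, smul_eq_mul,
      ← div_eq_inv_mul, Real.div_sqrt]

theorem sum_sum_mul_le_sqrt_mul_sqrt {ι κ : Type*} [Fintype ι] [Fintype κ] (f g : ι → κ → ℝ) :
    ∑ i, ∑ k, f i k * g i k ≤ √(∑ i, ∑ k, f i k ^ 2) * √(∑ i, ∑ k, g i k ^ 2) := by
  simpa only [Fintype.sum_prod_type] using
    Real.sum_mul_le_sqrt_mul_sqrt univ (fun p : ι × κ => f p.1 p.2) (fun p => g p.1 p.2)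

theorem traceNorm_mul_le {m n : ℕ} {κ : Type*} [Fintype κ] (X : Matrix (Fin m) κ ℝ)
    (Y : Matrix κ (Fin n) ℝ) :
    traceNorm (X * Y) ≤ √(∑ i, ∑ k, X i k ^ 2) * √(∑ k, ∑ j, Y k j ^ 2) := by
  obtain ⟨x, b, horth, hnorm, htr⟩ := exists_traceNorm_eq_sum_dotProduct_mulVec (X * Y)
  have hX : ∑ k, ∑ s, (x s ⬝ᵥ fun i => X i k) ^ 2 ≤ ∑ i, ∑ k, X i k ^ 2 := by
    refine (sum_le_sum fun k _ => ?_).trans_eq sum_comm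
    simpa only [dotProduct, sq] using
      sum_sq_dotProduct_le_of_pairwise_orthogonal x horth hnorm fun i => X i k
  have hY : ∑ k, ∑ s, ((⇑(b s) : Fin n → ℝ) ⬝ᵥ Y k) ^ 2 = ∑ k, ∑ j, Y k j ^ 2 := by
    simp only [b.sum_sq_dotProduct]
    simp only [dotProduct, sq]
  calc traceNorm (X * Y)
      = ∑ k, ∑ s, (x s ⬝ᵥ fun i => X i k) * ((⇑(b s) : Fin n → ℝ) ⬝ᵥ Y k) := by
        rw [htr, sum_comm]
        refine sum_congr rfl fun s _ => ?_
        rw [← mulVec_mulVec, dotProduct_mulVec]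
        simp only [dotProduct, vecMul, mulVec, mul_comm]
    _ ≤ _ := sum_sum_mul_le_sqrt_mul_sqrt _ _
    _ ≤ √(∑ i, ∑ k, X i k ^ 2) * √(∑ k, ∑ j, Y k j ^ 2) := by
        rw [hY]
        gcongr

theorem vecMulVec_hadamard_mul {X J Y : Type*} [Fintype X] [Fintype J] [Fintype Y]
    [DecidableEq X] [DecidableEq Y]
    (u : X → ℝ) (v : Y → ℝ) (A : Matrix X J ℝ) (B : Matrix J Y ℝ) :
    vecMulVec u v ⊙ (A * B) = (diagonal u * A) * (B * diagonal v) := by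
  rw [← Matrix.mul_assoc, Matrix.mul_assoc (diagonal u)]
  ext i j
  simp only [hadamard_apply, vecMulVec_apply, mul_diagonal, diagonal_mul]
  ring

theorem rowNormMax_nonneg {X J : Type*} [Fintype J] (A : Matrix X J ℝ) : 0 ≤ rowNormMax A :=
  Real.iSup_nonneg fun _ => Real.sqrt_nonneg _

theorem colNormMax_nonneg {J Y : Type*} [Fintype J] (B : Matrix J Y ℝ) : 0 ≤ colNormMax B :=
  Real.iSup_nonneg fun _ => Real.sqrt_nonneg _

theorem sum_sq_le_rowNormMax_sq {X J : Type*} [Finite X] [Fintype J] (A : Matrix X J ℝ) (i : X) :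
    ∑ j, A i j ^ 2 ≤ rowNormMax A ^ 2 :=
  (Real.sqrt_le_left (rowNormMax_nonneg A)).mp <|
    le_ciSup (f := fun i => √(∑ j, A i j ^ 2)) (Set.finite_range _).bddAbove i

theorem sqrt_sum_sq_diagonal_mul_le {X J : Type*} [Fintype X] [DecidableEq X] [Fintype J]
    (u : X → ℝ) (A : Matrix X J ℝ) :
    √(∑ i, ∑ j, (diagonal u * A) i j ^ 2) ≤ √(∑ i, u i ^ 2) * rowNormMax A := by
  rw [← Real.sqrt_sq (rowNormMax_nonneg A), ← Real.sqrt_mul (by positivity), sum_mul]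
  refine Real.sqrt_le_sqrt (sum_le_sum fun i _ => ?_)
  simp only [diagonal_mul, mul_pow, ← mul_sum]
  exact mul_le_mul_of_nonneg_left (sum_sq_le_rowNormMax_sq A i) (sq_nonneg _)

theorem sqrt_sum_sq_mul_diagonal_le {J Y : Type*} [Fintype J] [Fintype Y] [DecidableEq Y]
    (v : Y → ℝ) (B : Matrix J Y ℝ) :
    √(∑ k, ∑ j, (B * diagonal v) k j ^ 2) ≤ √(∑ j, v j ^ 2) * colNormMax B := by
  calc √(∑ k, ∑ j, (B * diagonal v) k j ^ 2) = √(∑ j, ∑ k, (diagonal v * Bᵀ) j k ^ 2) := by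
        rw [sum_comm]
        simp only [diagonal_mul, mul_diagonal, transpose_apply, mul_comm]
    _ ≤ √(∑ j, v j ^ 2) * colNormMax B := sqrt_sum_sq_diagonal_mul_le v Bᵀ

theorem gamma2_nonneg {X Y : Type*} [Fintype X] [Fintype Y] (M : Matrix X Y ℝ) :
    0 ≤ gamma2 M :=
  Real.sInf_nonneg <| by
    rintro _ ⟨r, A, B, -, rfl⟩
    exact mul_nonneg (rowNormMax_nonneg A) (colNormMax_nonneg B)

theorem le_gamma2 {X Y : Type*} [Fintype X] [Fintype Y] {M : Matrix X Y ℝ} {t : ℝ}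
    (h : ∀ (r : ℕ) (A : Matrix X (Fin r) ℝ) (B : Matrix (Fin r) Y ℝ),
      M = A * B → t ≤ rowNormMax A * colNormMax B) :
    t ≤ gamma2 M := by
  classical
  let e := Fintype.equivFin Y
  refine le_csInf ⟨_, _, M.submatrix id e.symm, (1 : Matrix Y Y ℝ).submatrix e.symm id, ?_, rfl⟩ ?_
  · rw [← submatrix_mul _ _ _ _ _ e.symm.bijective, Matrix.mul_one, submatrix_id_id]
  · rintro _ ⟨r, A, B, hAB, rfl⟩
    exact h r A B hAB

theorem traceNorm_vecMulVec_hadamard_mul_le {m n : ℕ} {κ : Type*} [Fintype κ] (u : Fin m → ℝ)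
    (v : Fin n → ℝ) (A : Matrix (Fin m) κ ℝ) (B : Matrix κ (Fin n) ℝ) :
    traceNorm (vecMulVec u v ⊙ (A * B)) ≤
      √(∑ i, u i ^ 2) * √(∑ j, v j ^ 2) * (rowNormMax A * colNormMax B) := by
  rw [vecMulVec_hadamard_mul]
  calc traceNorm (diagonal u * A * (B * diagonal v))
      ≤ √(∑ i, ∑ k, (diagonal u * A) i k ^ 2) * √(∑ k, ∑ j, (B * diagonal v) k j ^ 2) :=
        traceNorm_mul_le _ _
    _ ≤ (√(∑ i, u i ^ 2) * rowNormMax A) * (√(∑ j, v j ^ 2) * colNormMax B) :=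
        mul_le_mul (sqrt_sum_sq_diagonal_mul_le u A) (sqrt_sum_sq_mul_diagonal_le v B)
          (Real.sqrt_nonneg _) (mul_nonneg (Real.sqrt_nonneg _) (rowNormMax_nonneg A))
    _ = √(∑ i, u i ^ 2) * √(∑ j, v j ^ 2) * (rowNormMax A * colNormMax B) := by ring

/-- For unit vectors `u`, `v` and any factorization `M = A * B`, the trace norm of
`(u vᵀ) ∘ M` is at most `‖A‖_r · ‖B‖_c`; hence `γ₂(M)` dominates the supremum of these
trace norms over all unit vectors. -/
theorem traceNorm_hadamard_le_gamma2 {m n : ℕ} (M : Matrix (Fin m) (Fin n) ℝ) :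
    (∀ (u : Fin m → ℝ) (v : Fin n → ℝ),
      Real.sqrt (∑ i, u i ^ 2) = 1 → Real.sqrt (∑ j, v j ^ 2) = 1 →
      ∀ (r : ℕ) (A : Matrix (Fin m) (Fin r) ℝ) (B : Matrix (Fin r) (Fin n) ℝ),
        M = A * B →
        traceNorm (Matrix.hadamard (Matrix.vecMulVec u v) M) ≤ rowNormMax A * colNormMax B) ∧
    sSup {t : ℝ | ∃ (u : Fin m → ℝ) (v : Fin n → ℝ),
        Real.sqrt (∑ i, u i ^ 2) = 1 ∧ Real.sqrt (∑ j, v j ^ 2) = 1 ∧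
        t = traceNorm (Matrix.hadamard (Matrix.vecMulVec u v) M)} ≤ gamma2 M := by
  have key : ∀ (u : Fin m → ℝ) (v : Fin n → ℝ), √(∑ i, u i ^ 2) = 1 → √(∑ j, v j ^ 2) = 1 →
      ∀ (r : ℕ) (A : Matrix (Fin m) (Fin r) ℝ) (B : Matrix (Fin r) (Fin n) ℝ), M = A * B →
        traceNorm (vecMulVec u v ⊙ M) ≤ rowNormMax A * colNormMax B := by
    rintro u v hu hv r A B rfl
    simpa only [hu, hv, one_mul] using traceNorm_vecMulVec_hadamard_mul_le u v A B
  refine ⟨key, Real.sSup_le ?_ (gamma2_nonneg M)⟩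
  rintro _ ⟨u, v, hu, hv, rfl⟩
  exact le_gamma2 (key u v hu hv)
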